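/- arXiv:math/0702044 — 5 statements merged into one kernel-verified Lean document; each statement's English description precedes it below -/
import Mathlib

section
/- Let n ≥ 1 and let R and R' be commutative rings with unit that are elementarily equivalent in the first-order language of rings. Then the special linear groups SL_n(R) and SL_n(R') are elementarily equivalent in the first-order language of groups. -/
open FirstOrder

/-- The function symbols of the first-order language of groups:
multiplication, inverse, and identity. -/
inductive GroupFunc : ℕ → Type
  | mul : GroupFunc 2
  | inv : GroupFunc 1
  | one : GroupFunc 0

/-- The first-order language of groups. -/
def groupLang : FirstOrder.Language :=
  { Functions := GroupFunc, Relations := fun _ => Empty }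

/-- Any group is a structure for the language of groups in the natural way. -/
instance groupLangStructure (G : Type*) [Group G] : groupLang.Structure G where
  funMap {_} f v :=
    match f with
    | GroupFunc.mul => v 0 * v 1
    | GroupFunc.inv => (v 0)⁻¹
    | GroupFunc.one => 1
  RelMap {_} r := r.elim

/-- Two groups are elementarily equivalent in the first-order language of groups
if they satisfy exactly the same first-order sentences of the group language. -/
def GroupElemEquiv (G H : Type*) [Group G] [Group H] : Prop :=
  groupLang.ElementarilyEquivalent G H

/-- Two rings are elementarily equivalent in the first-order language of rings
if they satisfy exactly the same first-order sentences of the ring language. -/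
def RingElemEquiv (R S : Type*) [Ring R] [Ring S] : Prop :=
  letI := FirstOrder.Ring.compatibleRingOfRing R
  letI := FirstOrder.Ring.compatibleRingOfRing S
  FirstOrder.Language.ring.ElementarilyEquivalent R S

/-!
An element of `SL_ι(S)` is the tuple of its `ι × ι` entries, subject to the polynomial equation
`det = 1`, and the group operations are polynomial in the entries (the inverse is the adjugate).
Replacing each group variable by `ι × ι` ring variables, each quantifier over `SL_ι` by a block
of quantifiers relativized to `det = 1`, and each equation of group terms by the entrywise
equations of the corresponding polynomial matrices translates every group sentence `φ` into a ring
sentence that holds in `S` iff `φ` holds in `SL_ι(S)`, uniformly in `S`.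
-/

open Language Matrix

attribute [local instance] FirstOrder.Ring.compatibleRingOfRing

namespace Matrix.SpecialLinearGroup

variable {ι : Type*} [Fintype ι] {S : Type*} [CommRing S] {γ : Type*}

noncomputable def matrixEqFormula (A B : Matrix ι ι (FreeCommRing γ)) : Language.ring.Formula γ :=
  Formula.iInf fun ij : ι × ι =>
    Term.equal (Ring.termOfFreeCommRing (A ij.1 ij.2)) (Ring.termOfFreeCommRing (B ij.1 ij.2))

theorem realize_matrixEqFormula (A B : Matrix ι ι (FreeCommRing γ)) (w : γ → S) :
    (matrixEqFormula A B).Realize w ↔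
      A.map (FreeCommRing.lift w) = B.map (FreeCommRing.lift w) := by
  simp [matrixEqFormula, Formula.realize_iInf, ← Matrix.ext_iff]

variable [DecidableEq ι]

noncomputable def detEqOneFormula (A : Matrix ι ι (FreeCommRing γ)) : Language.ring.Formula γ :=
  Term.equal (Ring.termOfFreeCommRing A.det) 1

theorem realize_detEqOneFormula (A : Matrix ι ι (FreeCommRing γ)) (w : γ → S) :
    (detEqOneFormula A).Realize w ↔ (A.map (FreeCommRing.lift w)).det = 1 := by
  simp [detEqOneFormula, RingHom.map_det, Ring.realize_one]

def entries {β : Type*} (v : β → SpecialLinearGroup ι S) : β × ι × ι → S :=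
  fun p => (v p.1 : Matrix ι ι S) p.2.1 p.2.2

noncomputable def termMatrix {β : Type*} :
    groupLang.Term β → Matrix ι ι (FreeCommRing (β × ι × ι))
  | .var b => of fun i j => FreeCommRing.of (b, i, j)
  | .func GroupFunc.mul ts => termMatrix (ts 0) * termMatrix (ts 1)
  | .func GroupFunc.inv ts => (termMatrix (ts 0)).adjugate
  | .func GroupFunc.one _ => 1

theorem map_termMatrix {β : Type*} (t : groupLang.Term β) (v : β → SpecialLinearGroup ι S) :
    (termMatrix t).map (FreeCommRing.lift (entries v)) = t.realize v := by
  induction t with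
  | var b => ext i j; simp [termMatrix, entries]
  | func f ts ih =>
    cases f with
    | mul => exact Matrix.map_mul.trans (by rw [ih 0, ih 1]; rfl)
    | inv => exact (RingHom.map_adjugate _ _).trans (by rw [RingHom.mapMatrix_apply, ih 0]; rfl)
    | one => exact Matrix.map_one _ (map_zero _) (map_one _)

/-- Splits off the variables of the last bound group variable as a block of fresh ring
variables. -/
def snocVars {α : Type*} (k : ℕ) :
    (α ⊕ Fin (k + 1)) × ι × ι → ((α ⊕ Fin k) × ι × ι) ⊕ (ι × ι)
  | (.inl a, ij) => .inl (.inl a, ij)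
  | (.inr m, ij) => Fin.lastCases (.inr ij) (fun m' => .inl (.inr m', ij)) m

theorem entries_snoc {α : Type*} {k : ℕ} (v : α → SpecialLinearGroup ι S)
    (xs : Fin k → SpecialLinearGroup ι S) (x : SpecialLinearGroup ι S) :
    Sum.elim (entries (Sum.elim v xs)) (fun ij => (x : Matrix ι ι S) ij.1 ij.2) ∘ snocVars k =
      entries (Sum.elim v (Fin.snoc xs x)) := by
  funext ⟨m, i, j⟩
  rcases m with a | m
  · rfl
  · induction m using Fin.lastCases <;> simp [snocVars, entries]

noncomputable def toRingFormula {α : Type*} : ∀ {k : ℕ}, groupLang.BoundedFormula α k →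
    Language.ring.Formula ((α ⊕ Fin k) × ι × ι)
  | _, .falsum => ⊥
  | _, .equal t₁ t₂ => matrixEqFormula (termMatrix t₁) (termMatrix t₂)
  | _, .rel R _ => Empty.elim R
  | _, .imp φ ψ => (toRingFormula φ).imp (toRingFormula ψ)
  | k, .all φ => Formula.iAlls (ι × ι)
      ((detEqOneFormula (of fun i j => FreeCommRing.of (.inr (i, j)))).imp
        ((toRingFormula φ).relabel (snocVars k)))

theorem realize_toRingFormula {α : Type*} {k : ℕ} (φ : groupLang.BoundedFormula α k)
    (v : α → SpecialLinearGroup ι S) (xs : Fin k → SpecialLinearGroup ι S) :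
    φ.Realize v xs ↔ (toRingFormula φ).Realize (entries (Sum.elim v xs)) := by
  induction φ with
  | falsum => exact iff_of_false id id
  | equal t₁ t₂ =>
    rw [toRingFormula, realize_matrixEqFormula, map_termMatrix, map_termMatrix]
    exact Subtype.coe_inj.symm
  | rel R _ => exact R.elim
  | imp φ ψ ihφ ihψ => rw [toRingFormula, BoundedFormula.realize_imp, Formula.realize_imp, ihφ, ihψ]
  | all φ ih =>
    rw [toRingFormula, BoundedFormula.realize_all, Formula.realize_iAlls]
    simp only [Formula.realize_imp, realize_detEqOneFormula, Formula.realize_relabel]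
    have hdet (g : ι × ι → S) : (of fun i j => FreeCommRing.of (.inr (i, j))).map
        (FreeCommRing.lift (Sum.elim (entries (Sum.elim v xs)) g)) = of fun i j => g (i, j) := by
      ext; simp
    simp only [hdet]
    constructor
    · intro H g hg
      let x : SpecialLinearGroup ι S := ⟨of fun i j => g (i, j), hg⟩
      have hx := (ih (Fin.snoc xs x)).1 (H x)
      rwa [← entries_snoc] at hx
    · intro H x
      rw [ih, ← entries_snoc]
      exact H _ x.2

noncomputable def toRingSentence (φ : groupLang.Sentence) : Language.ring.Sentence :=
  (toRingFormula φ).relabel fun p : (Empty ⊕ Fin 0) × ι × ι => Sum.elim Empty.elim Fin.elim0 p.1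

theorem realize_toRingSentence (φ : groupLang.Sentence) :
    SpecialLinearGroup ι S ⊨ φ ↔ S ⊨ toRingSentence (ι := ι) φ := by
  rw [Sentence.Realize, Sentence.Realize, toRingSentence, Formula.realize_relabel, Formula.Realize,
    realize_toRingFormula]
  exact iff_of_eq (congrArg _ (funext fun ⟨p, _⟩ => p.elim Empty.elim Fin.elim0))

theorem elementarilyEquivalent_of_elementarilyEquivalent {S' : Type*} [CommRing S']
    (h : Language.ring.ElementarilyEquivalent S S') :
    groupLang.ElementarilyEquivalent (SpecialLinearGroup ι S) (SpecialLinearGroup ι S') :=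
  elementarilyEquivalent_iff.2 fun φ => by
    rw [realize_toRingSentence, realize_toRingSentence]
    exact elementarilyEquivalent_iff.1 h _

end Matrix.SpecialLinearGroup

theorem specialLinearGroup_elementarilyEquivalent_of_ringElemEquiv_general
    (n : ℕ) (R R' : Type) [CommRing R] [CommRing R']
    (h : RingElemEquiv R R') :
    GroupElemEquiv (Matrix.SpecialLinearGroup (Fin n) R)
      (Matrix.SpecialLinearGroup (Fin n) R') :=
  Matrix.SpecialLinearGroup.elementarilyEquivalent_of_elementarilyEquivalent h

/-- If `R` and `R'` are commutative rings with unit that are elementarily equivalent in the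
first-order language of rings, then for every `n ≥ 1` the special linear groups `SL_n(R)` and
`SL_n(R')` are elementarily equivalent in the first-order language of groups. -/
theorem specialLinearGroup_elementarilyEquivalent_of_ringElemEquiv
    (n : ℕ) (hn : 1 ≤ n) (R R' : Type) [CommRing R] [CommRing R']
    (h : RingElemEquiv R R') :
    GroupElemEquiv (Matrix.SpecialLinearGroup (Fin n) R)
      (Matrix.SpecialLinearGroup (Fin n) R') :=
  specialLinearGroup_elementarilyEquivalent_of_ringElemEquiv_general n R R' h
end

section
/- Let G be a group and N ≥ 1 a natural number. Suppose that every product of 2N commutators [x,y] = x y x⁻¹ y⁻¹ of elements of G is equal to a product of N commutators of elements of G. Then the set of all products of at most N commutators of elements of G is a subgroup of G and equals the commutator subgroup [G,G]. -/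
open FirstOrder
open scoped commutatorElement

/-- `g` is a product of at most `N` commutators of elements of `G`. -/
def IsProdOfAtMostNCommutators {G : Type*} [Group G] (N : ℕ) (g : G) : Prop :=
  ∃ l : List (G × G), l.length ≤ N ∧ g = (l.map fun q => ⁅q.1, q.2⁆).prod

section

variable {G : Type*} [Group G]

theorem isProdOfAtMostNCommutators_iff_exists_length_eq {n : ℕ} {g : G} :
    IsProdOfAtMostNCommutators n g ↔
      ∃ l : List (G × G), l.length = n ∧ g = (l.map fun q => ⁅q.1, q.2⁆).prod := by
  refine ⟨?_, fun ⟨l, hl, hg⟩ => ⟨l, hl.le, hg⟩⟩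
  rintro ⟨l, hl, rfl⟩
  refine ⟨l ++ List.replicate (n - l.length) (1, 1), by simp; omega, ?_⟩
  simp [List.map_replicate]

theorem isProdOfAtMostNCommutators_one (n : ℕ) : IsProdOfAtMostNCommutators n (1 : G) :=
  ⟨[], by simp, by simp⟩

theorem isProdOfAtMostNCommutators_commutatorElement {n : ℕ} (hn : 1 ≤ n) (a b : G) :
    IsProdOfAtMostNCommutators n ⁅a, b⁆ :=
  ⟨[(a, b)], by simpa using hn, by simp⟩

theorem IsProdOfAtMostNCommutators.inv {n : ℕ} {g : G} (hg : IsProdOfAtMostNCommutators n g) :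
    IsProdOfAtMostNCommutators n g⁻¹ := by
  obtain ⟨l, hl, rfl⟩ := hg
  -- `⁅a, b⁆⁻¹ = ⁅b, a⁆`
  refine ⟨(l.map Prod.swap).reverse, by simpa using hl, ?_⟩
  rw [List.prod_inv_reverse]
  simp [Function.comp_def, List.map_reverse]

theorem IsProdOfAtMostNCommutators.mul {m n : ℕ} {a b : G}
    (ha : IsProdOfAtMostNCommutators m a) (hb : IsProdOfAtMostNCommutators n b) :
    IsProdOfAtMostNCommutators (m + n) (a * b) := by
  obtain ⟨l₁, hl₁, rfl⟩ := ha
  obtain ⟨l₂, hl₂, rfl⟩ := hb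
  exact ⟨l₁ ++ l₂, by simp; omega, by simp⟩

theorem IsProdOfAtMostNCommutators.mem_commutator {n : ℕ} {g : G}
    (hg : IsProdOfAtMostNCommutators n g) : g ∈ commutator G := by
  obtain ⟨l, -, rfl⟩ := hg
  refine Subgroup.list_prod_mem _ fun x hx => ?_
  obtain ⟨q, -, rfl⟩ := List.mem_map.mp hx
  exact Subgroup.commutator_mem_commutator (Subgroup.mem_top _) (Subgroup.mem_top _)

def prodOfAtMostNCommutatorsSubgroup (N : ℕ)
    (h : ∀ g : G, IsProdOfAtMostNCommutators (N + N) g → IsProdOfAtMostNCommutators N g) :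
    Subgroup G where
  carrier := {g | IsProdOfAtMostNCommutators N g}
  one_mem' := isProdOfAtMostNCommutators_one N
  mul_mem' ha hb := h _ (ha.mul hb)
  inv_mem' := IsProdOfAtMostNCommutators.inv

theorem prodOfAtMostNCommutatorsSubgroup_eq_commutator {N : ℕ} (hN : 1 ≤ N)
    (h : ∀ g : G, IsProdOfAtMostNCommutators (N + N) g → IsProdOfAtMostNCommutators N g) :
    prodOfAtMostNCommutatorsSubgroup N h = commutator G := by
  refine le_antisymm (fun g hg => hg.mem_commutator) ?_
  rw [commutator_eq_closure, Subgroup.closure_le]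
  rintro _ ⟨a, b, rfl⟩
  exact isProdOfAtMostNCommutators_commutatorElement hN a b

end

/-- If every product of `2N` commutators of elements of a group `G` is equal to a product of
`N` commutators, then the set of products of at most `N` commutators is a subgroup of `G`
and equals the commutator subgroup `[G,G]`. -/
theorem prodOfAtMostNCommutators_eq_commutator
    (G : Type) [Group G] (N : ℕ) (hN : 1 ≤ N)
    (h : ∀ l : List (G × G), l.length = 2 * N →
      ∃ l' : List (G × G), l'.length = N ∧
        (l.map fun q => ⁅q.1, q.2⁆).prod = (l'.map fun q => ⁅q.1, q.2⁆).prod) :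
    ∃ H : Subgroup G, (H : Set G) = {g : G | IsProdOfAtMostNCommutators N g} ∧
      H = commutator G := by
  have halve : ∀ g : G, IsProdOfAtMostNCommutators (N + N) g →
      IsProdOfAtMostNCommutators N g := by
    intro g hg
    obtain ⟨l, hl, rfl⟩ := isProdOfAtMostNCommutators_iff_exists_length_eq.mp hg
    obtain ⟨l', hl', hprod⟩ := h l (by omega)
    exact isProdOfAtMostNCommutators_iff_exists_length_eq.mpr ⟨l', hl', hprod⟩
  exact ⟨prodOfAtMostNCommutatorsSubgroup N halve, rfl,
    prodOfAtMostNCommutatorsSubgroup_eq_commutator hN halve⟩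
end

section
/- Let K be a field of characteristic ≠ 2 and let j be an element of order 2 in PSL_2(K). Then the commutator subgroup of the centralizer of j in PSL_2(K) is abelian. -/
open FirstOrder

section Psl2Aux

variable {K : Type} [Field K]

local notation "SL2" K => Matrix.SpecialLinearGroup (Fin 2) K
local notation "M2" K => Matrix (Fin 2) (Fin 2) K

private lemma psl2Aux.matrix_eq_of_entries (A J : M2 K) (α β : K)
    (h00 : A 0 0 = α + β * J 0 0) (h01 : A 0 1 = β * J 0 1)
    (h10 : A 1 0 = β * J 1 0) (h11 : A 1 1 = α + β * J 1 1) :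
    A = α • 1 + β • J := by
  ext i j
  fin_cases i <;> fin_cases j <;> simp [Matrix.one_apply, h00, h01, h10, h11]

/-- A matrix commuting with a traceless non-scalar `J` lies in the plane spanned by `1, J`. -/
private lemma psl2Aux.decomp_of_comm (h2 : (2:K) ≠ 0) (J A : M2 K)
    (htr : J 1 1 = - J 0 0) (hdet : J 0 0 * J 0 0 + J 0 1 * J 1 0 = -1)
    (hcomm : A * J = J * A) : ∃ α β : K, A = α • 1 + β • J := by
  have e0 : (A*J) 0 0 = (J*A) 0 0 := by rw [hcomm]
  have e1 : (A*J) 0 1 = (J*A) 0 1 := by rw [hcomm]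
  have e2 : (A*J) 1 0 = (J*A) 1 0 := by rw [hcomm]
  simp only [Matrix.mul_apply, Fin.sum_univ_two, htr] at e0 e1 e2
  by_cases hb0 : J 0 1 ≠ 0
  · refine ⟨A 0 0 - (A 0 1 / J 0 1) * J 0 0, A 0 1 / J 0 1,
      psl2Aux.matrix_eq_of_entries A J _ _ (by ring) (div_mul_cancel₀ _ hb0).symm ?_ ?_⟩
    · field_simp
      linear_combination -e0
    · rw [htr]; field_simp; linear_combination -e1
  · push_neg at hb0
    by_cases hc0 : J 1 0 ≠ 0
    · have hq : A 0 1 = 0 := by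
        rcases mul_eq_zero.mp (show A 0 1 * J 1 0 = 0 by
          linear_combination e0 + A 1 0 * hb0) with h | h
        · exact h
        · exact absurd h hc0
      refine ⟨A 0 0 - (A 1 0 / J 1 0) * J 0 0, A 1 0 / J 1 0,
        psl2Aux.matrix_eq_of_entries A J _ _ (by ring) (by rw [hb0, hq]; ring)
          (div_mul_cancel₀ _ hc0).symm ?_⟩
      rw [htr]; field_simp; linear_combination e2
    · push_neg at hc0
      have ha0 : J 0 0 ≠ 0 := by
        intro h; rw [h, hb0] at hdet; simp at hdet
      have hq : A 0 1 = 0 := by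
        have h : 2 * J 0 0 * A 0 1 = 0 := by linear_combination -e1 + (A 0 0 - A 1 1) * hb0
        rcases mul_eq_zero.mp h with h' | h'
        · rcases mul_eq_zero.mp h' with h'' | h''
          · exact absurd h'' h2
          · exact absurd h'' ha0
        · exact h'
      have hr : A 1 0 = 0 := by
        have h : 2 * J 0 0 * A 1 0 = 0 := by linear_combination e2 + (A 0 0 - A 1 1) * hc0
        rcases mul_eq_zero.mp h with h' | h'
        · rcases mul_eq_zero.mp h' with h'' | h''
          · exact absurd h'' h2
          · exact absurd h'' ha0
        · exact h'
      refine ⟨(A 0 0 + A 1 1) / 2, (A 0 0 - A 1 1) / (2 * J 0 0),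
        psl2Aux.matrix_eq_of_entries A J _ _ ?_ (by rw [hb0, hq]; ring)
          (by rw [hc0, hr]; ring) ?_⟩
      · field_simp; ring
      · rw [htr]; field_simp; ring

private lemma psl2Aux.comm_of_decomp (J : M2 K) {A B : M2 K}
    (hA : ∃ α β : K, A = α • 1 + β • J) (hB : ∃ γ δ : K, B = γ • 1 + δ • J) :
    A * B = B * A := by
  obtain ⟨α, β, rfl⟩ := hA
  obtain ⟨γ, δ, rfl⟩ := hB
  simp only [add_mul, mul_add, smul_mul_assoc, mul_smul_comm, smul_smul, one_mul, mul_one]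
  module

private lemma psl2Aux.pull_mul (J X Y : M2 K) (t u : K)
    (hX : X * J = t • (J * X)) (hY : Y * J = u • (J * Y)) :
    (X * Y) * J = (t * u) • (J * (X * Y)) := by
  rw [mul_assoc, hY, mul_smul_comm, ← mul_assoc, hX, smul_mul_assoc, smul_smul,
    mul_assoc, mul_comm u t]

private lemma psl2Aux.sign_inv (r : K) (hr : r * r = 1) (Jm Am A' : M2 K)
    (h : Am * Jm = r • (Jm * Am)) (h1 : A' * Am = 1) (h2 : Am * A' = 1) :
    A' * Jm = r • (Jm * A') := by
  have h3 := congrArg (fun M : M2 K => A' * M * A') h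
  simp only [mul_smul_comm, smul_mul_assoc, ← mul_assoc] at h3
  rw [h1, one_mul, mul_assoc, h2, mul_one] at h3
  have h4 := congrArg (fun M : M2 K => r • M) h3
  simp only [smul_smul, hr, one_smul] at h4
  exact h4.symm

private lemma psl2Aux.scalar_of_sq_one (h2 : (2:K) ≠ 0) (J : M2 K)
    (hdet : J.det = 1) (hsq : J * J = 1) :
    J 0 0 * J 0 0 = 1 ∧ Matrix.scalar (Fin 2) (J 0 0) = J := by
  have e0 : (J*J) 0 0 = (1 : M2 K) 0 0 := by rw [hsq]
  have e1 : (J*J) 0 1 = (1 : M2 K) 0 1 := by rw [hsq]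
  have e2 : (J*J) 1 0 = (1 : M2 K) 1 0 := by rw [hsq]
  rw [Matrix.det_fin_two] at hdet
  simp only [Matrix.mul_apply, Fin.sum_univ_two, Matrix.one_apply_eq,
    Matrix.one_apply_ne (by decide : (0:Fin 2) ≠ 1),
    Matrix.one_apply_ne (by decide : (1:Fin 2) ≠ 0)] at e0 e1 e2
  have had : J 0 0 + J 1 1 ≠ 0 := by
    intro h
    have : (2:K) = 0 := by linear_combination -e0 - hdet + J 0 0 * h
    exact h2 this
  have hb : J 0 1 = 0 := by
    rcases mul_eq_zero.mp (show J 0 1 * (J 0 0 + J 1 1) = 0 by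
      linear_combination e1) with h | h
    · exact h
    · exact absurd h had
  have hc : J 1 0 = 0 := by
    rcases mul_eq_zero.mp (show J 1 0 * (J 0 0 + J 1 1) = 0 by
      linear_combination e2) with h | h
    · exact h
    · exact absurd h had
  have ha1 : J 0 0 * J 0 0 = 1 := by linear_combination e0 - J 1 0 * hb
  have ha0 : J 0 0 ≠ 0 :=
    fun h => one_ne_zero (by linear_combination -ha1 + J 0 0 * h : (1:K) = 0)
  have hd : J 1 1 = J 0 0 := by
    have h : J 0 0 * (J 1 1 - J 0 0) = 0 := by linear_combination hdet - ha1 + J 1 0 * hb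
    rcases mul_eq_zero.mp h with h' | h'
    · exact absurd h' ha0
    · linear_combination h'
  refine ⟨ha1, ?_⟩
  ext i j
  fin_cases i <;> fin_cases j <;>
    simp [Matrix.scalar_apply, Matrix.diagonal_apply, hb, hc, hd]

private lemma psl2Aux.traceless_of_sq_neg_one (J : M2 K)
    (hdet : J.det = 1) (hsq : J * J = -1) :
    J 1 1 = - J 0 0 ∧ J 0 0 * J 0 0 + J 0 1 * J 1 0 = -1 := by
  have e0 : (J*J) 0 0 = (-1 : M2 K) 0 0 := by rw [hsq]
  have e1 : (J*J) 0 1 = (-1 : M2 K) 0 1 := by rw [hsq]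
  have e2 : (J*J) 1 0 = (-1 : M2 K) 1 0 := by rw [hsq]
  rw [Matrix.det_fin_two] at hdet
  simp only [Matrix.mul_apply, Fin.sum_univ_two, Matrix.neg_apply, Matrix.one_apply_eq,
    Matrix.one_apply_ne (by decide : (0:Fin 2) ≠ 1),
    Matrix.one_apply_ne (by decide : (1:Fin 2) ≠ 0), neg_zero] at e0 e1 e2
  have key : J 0 0 + J 1 1 = 0 := by
    by_contra had
    have hb : J 0 1 = 0 := by
      rcases mul_eq_zero.mp (show J 0 1 * (J 0 0 + J 1 1) = 0 by
        linear_combination e1) with h | h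
      · exact h
      · exact absurd h had
    have hc : J 1 0 = 0 := by
      rcases mul_eq_zero.mp (show J 1 0 * (J 0 0 + J 1 1) = 0 by
        linear_combination e2) with h | h
      · exact h
      · exact absurd h had
    have ha1 : J 0 0 * J 0 0 = -1 := by linear_combination e0 - J 1 0 * hb
    have ha0 : J 0 0 ≠ 0 :=
      fun h => one_ne_zero (by linear_combination ha1 - J 0 0 * h : (1:K) = 0)
    have h : J 0 0 * (J 0 0 + J 1 1) = 0 := by
      linear_combination ha1 + hdet + J 1 0 * hb
    rcases mul_eq_zero.mp h with h' | h'
    · exact absurd h' ha0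
    · exact absurd h' had
  exact ⟨by linear_combination key, e0⟩

private lemma psl2Aux.mul_scalar_eq_smul (r : K) (X : M2 K) :
    X * (Matrix.scalar (Fin 2) r) = r • X := by
  rw [Matrix.scalar_apply, ← Matrix.op_smul_eq_mul_diagonal, op_smul_eq_smul]

private lemma psl2Aux.inv_coe_comm {J A : SL2 K}
    (hA : (A : M2 K) * (J : M2 K) = (J : M2 K) * (A : M2 K)) :
    ((A⁻¹ : SL2 K) : M2 K) * (J : M2 K) = (J : M2 K) * ((A⁻¹ : SL2 K) : M2 K) := by
  have h1 : ((A⁻¹ : SL2 K) : M2 K) * (A : M2 K) = 1 := by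
    rw [← Matrix.SpecialLinearGroup.coe_mul, inv_mul_cancel, Matrix.SpecialLinearGroup.coe_one]
  have h2 : (A : M2 K) * ((A⁻¹ : SL2 K) : M2 K) = 1 := by
    rw [← Matrix.SpecialLinearGroup.coe_mul, mul_inv_cancel, Matrix.SpecialLinearGroup.coe_one]
  have h3 := congrArg
    (fun M : M2 K => ((A⁻¹ : SL2 K) : M2 K) * M * ((A⁻¹ : SL2 K) : M2 K)) hA
  simp only [← mul_assoc] at h3
  rw [h1, one_mul, mul_assoc, h2, mul_one] at h3
  exact h3.symm

/-- The subgroup of `PSL₂` of elements having a lift commuting with a fixed `J`. -/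
private def psl2Aux.commSubgroup (J : Matrix.SpecialLinearGroup (Fin 2) K) :
    Subgroup ((SL2 K) ⧸ Subgroup.center (SL2 K)) where
  carrier := {x | ∃ A : SL2 K, QuotientGroup.mk A = x ∧
    (A : M2 K) * (J : M2 K) = (J : M2 K) * (A : M2 K)}
  one_mem' := ⟨1, rfl, by simp⟩
  mul_mem' := by
    rintro x y ⟨A, rfl, hA⟩ ⟨B, rfl, hB⟩
    refine ⟨A * B, rfl, ?_⟩
    simp only [Matrix.SpecialLinearGroup.coe_mul]
    rw [mul_assoc, hB, ← mul_assoc, hA, mul_assoc]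
  inv_mem' := by
    rintro x ⟨A, rfl, hA⟩
    exact ⟨A⁻¹, rfl, psl2Aux.inv_coe_comm hA⟩

private lemma psl2Aux.sign_of_centralizer (J A : SL2 K)
    (h : QuotientGroup.mk (s := Subgroup.center (SL2 K)) (J * A) = QuotientGroup.mk (A * J)) :
    ∃ r : K, r * r = 1 ∧
      r • ((J : M2 K) * (A : M2 K)) = (A : M2 K) * (J : M2 K) := by
  rw [QuotientGroup.eq] at h
  obtain ⟨r, hr1, hr2⟩ := Matrix.SpecialLinearGroup.mem_center_iff.mp h
  refine ⟨r, by simpa [pow_two] using hr1, ?_⟩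
  have h4 : (J * A : SL2 K) * ((J*A)⁻¹ * (A*J)) = A*J := by group
  have h5 : ((J*A : SL2 K) : M2 K) * Matrix.scalar (Fin 2) r = ((A*J : SL2 K) : M2 K) := by
    rw [hr2, ← Matrix.SpecialLinearGroup.coe_mul, h4]
  rw [psl2Aux.mul_scalar_eq_smul] at h5
  simpa only [Matrix.SpecialLinearGroup.coe_mul] using h5

end Psl2Aux

/-- Over a field `K` of characteristic `≠ 2`, the commutator subgroup of the centralizer of
any element of order 2 in `PSL_2(K)` is abelian. -/
theorem commutator_of_centralizer_of_involution_psl2_abelian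
    (K : Type) [Field K] (hchar : ringChar K ≠ 2)
    (j : Matrix.SpecialLinearGroup (Fin 2) K ⧸
        Subgroup.center (Matrix.SpecialLinearGroup (Fin 2) K))
    (hj : orderOf j = 2) :
    ∀ x y : ↥(commutator ↥(Subgroup.centralizer ({j} :
        Set (Matrix.SpecialLinearGroup (Fin 2) K ⧸
          Subgroup.center (Matrix.SpecialLinearGroup (Fin 2) K))))),
      x * y = y * x := by
  obtain ⟨J, rfl⟩ := QuotientGroup.mk_surjective j
  have h2 : (2:K) ≠ 0 := Ring.two_ne_zero hchar
  have hsq : (J * J : Matrix.SpecialLinearGroup (Fin 2) K) ∈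
      Subgroup.center (Matrix.SpecialLinearGroup (Fin 2) K) := by
    have hord := pow_orderOf_eq_one (QuotientGroup.mk
      (s := Subgroup.center (Matrix.SpecialLinearGroup (Fin 2) K)) J)
    rw [hj] at hord
    rw [← QuotientGroup.eq_one_iff, QuotientGroup.mk_mul, ← pow_two]
    exact hord
  obtain ⟨r, hr1, hr2⟩ := Matrix.SpecialLinearGroup.mem_center_iff.mp hsq
  rw [Fintype.card_fin] at hr1
  rcases mul_self_eq_one_iff.mp (by rwa [pow_two] at hr1) with rfl | rfl
  · -- impossible: J would be central and j = 1
    exfalso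
    have hJJ : (J : Matrix (Fin 2) (Fin 2) K) * J = 1 := by
      rw [← Matrix.SpecialLinearGroup.coe_mul, ← hr2, map_one]
    obtain ⟨ha1, hscal⟩ := psl2Aux.scalar_of_sq_one h2 (J : Matrix (Fin 2) (Fin 2) K)
      J.prop hJJ
    have hcen : J ∈ Subgroup.center (Matrix.SpecialLinearGroup (Fin 2) K) :=
      Matrix.SpecialLinearGroup.mem_center_iff.mpr
        ⟨(J : Matrix (Fin 2) (Fin 2) K) 0 0,
          by rw [Fintype.card_fin, pow_two]; exact ha1, hscal⟩
    rw [(QuotientGroup.eq_one_iff J).mpr hcen, orderOf_one] at hj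
    exact absurd hj (by norm_num)
  · -- J² = -1
    have hJJ : (J : Matrix (Fin 2) (Fin 2) K) * J = -1 := by
      rw [← Matrix.SpecialLinearGroup.coe_mul, ← hr2, map_neg, map_one]
    obtain ⟨htr, hdet⟩ := psl2Aux.traceless_of_sq_neg_one
      (J : Matrix (Fin 2) (Fin 2) K) J.prop hJJ
    set PSL := Matrix.SpecialLinearGroup (Fin 2) K ⧸
      Subgroup.center (Matrix.SpecialLinearGroup (Fin 2) K) with hPSL
    set Cz := Subgroup.centralizer ({QuotientGroup.mk J} : Set PSL) with hCz
    -- commutators of the centralizer lie in commSubgroup J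
    have hSle : ⁅Cz, Cz⁆ ≤ psl2Aux.commSubgroup J := by
      rw [Subgroup.commutator_le]
      intro g hg h hh
      obtain ⟨A, rfl⟩ := QuotientGroup.mk_surjective g
      obtain ⟨B, rfl⟩ := QuotientGroup.mk_surjective h
      have hgA : QuotientGroup.mk (s := Subgroup.center (Matrix.SpecialLinearGroup (Fin 2) K))
          (J * A) = QuotientGroup.mk (A * J) := by
        rw [QuotientGroup.mk_mul, QuotientGroup.mk_mul]
        exact Subgroup.mem_centralizer_iff.mp hg _ (Set.mem_singleton _)
      have hgB : QuotientGroup.mk (s := Subgroup.center (Matrix.SpecialLinearGroup (Fin 2) K))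
          (J * B) = QuotientGroup.mk (B * J) := by
        rw [QuotientGroup.mk_mul, QuotientGroup.mk_mul]
        exact Subgroup.mem_centralizer_iff.mp hh _ (Set.mem_singleton _)
      obtain ⟨r, hrr, hA⟩ := psl2Aux.sign_of_centralizer J A hgA
      obtain ⟨s, hss, hB⟩ := psl2Aux.sign_of_centralizer J B hgB
      refine ⟨A * B * A⁻¹ * B⁻¹, ?_, ?_⟩
      · rw [commutatorElement_def]
        simp only [QuotientGroup.mk_mul, QuotientGroup.mk_inv]
      · -- matrix computation
        have h1A : ((A⁻¹ : Matrix.SpecialLinearGroup (Fin 2) K) : Matrix (Fin 2) (Fin 2) K) *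
            (A : Matrix (Fin 2) (Fin 2) K) = 1 := by
          rw [← Matrix.SpecialLinearGroup.coe_mul, inv_mul_cancel,
            Matrix.SpecialLinearGroup.coe_one]
        have h2A : (A : Matrix (Fin 2) (Fin 2) K) *
            ((A⁻¹ : Matrix.SpecialLinearGroup (Fin 2) K) : Matrix (Fin 2) (Fin 2) K) = 1 := by
          rw [← Matrix.SpecialLinearGroup.coe_mul, mul_inv_cancel,
            Matrix.SpecialLinearGroup.coe_one]
        have h1B : ((B⁻¹ : Matrix.SpecialLinearGroup (Fin 2) K) : Matrix (Fin 2) (Fin 2) K) *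
            (B : Matrix (Fin 2) (Fin 2) K) = 1 := by
          rw [← Matrix.SpecialLinearGroup.coe_mul, inv_mul_cancel,
            Matrix.SpecialLinearGroup.coe_one]
        have h2B : (B : Matrix (Fin 2) (Fin 2) K) *
            ((B⁻¹ : Matrix.SpecialLinearGroup (Fin 2) K) : Matrix (Fin 2) (Fin 2) K) = 1 := by
          rw [← Matrix.SpecialLinearGroup.coe_mul, mul_inv_cancel,
            Matrix.SpecialLinearGroup.coe_one]
        have hA' := psl2Aux.sign_inv r hrr _ _ _ hA.symm h1A h2A
        have hB' := psl2Aux.sign_inv s hss _ _ _ hB.symm h1B h2B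
        have hAB := psl2Aux.pull_mul (J : Matrix (Fin 2) (Fin 2) K) _ _ r s hA.symm hB.symm
        have hABA := psl2Aux.pull_mul (J : Matrix (Fin 2) (Fin 2) K) _ _ (r*s) r hAB hA'
        have hfull := psl2Aux.pull_mul (J : Matrix (Fin 2) (Fin 2) K) _ _ ((r*s)*r) s hABA hB'
        have hcoef : ((r*s)*r)*s = 1 := by
          rw [show ((r*s)*r)*s = (r*r)*(s*s) by ring, hrr, hss, mul_one]
        rw [hcoef, one_smul] at hfull
        simp only [Matrix.SpecialLinearGroup.coe_mul]
        exact hfull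
    -- elements of commSubgroup J commute
    have hScomm : ∀ u v : PSL, u ∈ psl2Aux.commSubgroup J → v ∈ psl2Aux.commSubgroup J →
        u * v = v * u := by
      rintro u v ⟨A, rfl, hA⟩ ⟨B, rfl, hB⟩
      have hcm := psl2Aux.comm_of_decomp (J : Matrix (Fin 2) (Fin 2) K)
        (psl2Aux.decomp_of_comm h2 _ _ htr hdet hA)
        (psl2Aux.decomp_of_comm h2 _ _ htr hdet hB)
      have : (A * B : Matrix.SpecialLinearGroup (Fin 2) K) = B * A := by
        apply Subtype.ext
        simpa only [Matrix.SpecialLinearGroup.coe_mul] using hcm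
      rw [← QuotientGroup.mk_mul, ← QuotientGroup.mk_mul, this]
    -- image of commutator subgroup lies in commSubgroup J
    have himg : ∀ w : ↥Cz, w ∈ commutator ↥Cz → (w : PSL) ∈ psl2Aux.commSubgroup J := by
      intro w hw
      have hmem : (w : PSL) ∈ Subgroup.map Cz.subtype (commutator ↥Cz) :=
        ⟨w, hw, rfl⟩
      rw [commutator_def, Subgroup.map_commutator] at hmem
      have hmap : Subgroup.map Cz.subtype ⊤ = Cz := by
        rw [← MonoidHom.range_eq_map, Subgroup.range_subtype]
      rw [hmap] at hmem
      exact hSle hmem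
    intro x y
    apply Subtype.ext
    apply Subtype.ext
    exact hScomm _ _ (himg x.1 x.2) (himg y.1 y.2)
end

section
/- Let K be an infinite field of characteristic ≠ 2 and let j be the image in PSL_3(K) of the diagonal matrix diag(−1, −1, 1) ∈ SL_3(K). Then the commutator subgroup of the centralizer of j in PSL_3(K) is not abelian. -/
open FirstOrder

/-- The matrix `diag(−1, −1, 1)` as an element of `SL_3(K)`. -/
def diagInvolutionSL3 (K : Type) [Field K] : Matrix.SpecialLinearGroup (Fin 3) K :=
  ⟨Matrix.diagonal ![(-1 : K), -1, 1], by
    norm_num [Matrix.det_diagonal, Fin.prod_univ_three]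
    all_goals rfl⟩

/-!
The centralizer of the image of `j = diag(-1, -1, 1)` in `PSL₃(K)` contains the images of
`D = diag(a, 1, a⁻¹)` and of the transvections `E₀₁(1)`, `E₁₀(1)`, all of which commute with `j`
already in `SL₃(K)`. Conjugation by a diagonal matrix rescales a transvection, so
`[D, E₀₁(1)] = E₀₁(a - 1)` and `[D, E₁₀(1)] = E₁₀(a⁻¹ - 1)`; both are nontrivial once `a ∉ {0, 1}`,
which an infinite field provides. Opposite transvections `E₀₁(u)`, `E₁₀(v)` with `u v ≠ 0` do not
commute even modulo scalars: the third diagonal entry forces the scalar to be `1`, and then the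
`(0, 0)` entries of the two products are `1 + u v` and `1`.
-/

open scoped commutatorElement

theorem exists_mul_ne_mul_of_not_commute_commutatorElement {G : Type*} [Group G] {a b c d : G}
    (h : ¬Commute ⁅a, b⁆ ⁅c, d⁆) : ∃ x y : commutator G, x * y ≠ y * x := by
  have hmem (g₁ g₂ : G) : ⁅g₁, g₂⁆ ∈ commutator G :=
    commutator_def G ▸ Subgroup.commutator_mem_commutator (Subgroup.mem_top g₁)
      (Subgroup.mem_top g₂)
  exact ⟨⟨_, hmem a b⟩, ⟨_, hmem c d⟩, fun hxy ↦ h (congrArg Subtype.val hxy)⟩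

namespace QuotientGroup

variable {G : Type*} [Group G] {N : Subgroup G} [N.Normal]

theorem mk_commutatorElement (g h : G) : ((⁅g, h⁆ : G) : G ⧸ N) = ⁅(g : G ⧸ N), (h : G ⧸ N)⁆ :=
  map_commutatorElement (mk' N) g h

theorem mk_mem_centralizer_singleton_of_commute {g h : G} (hgh : Commute g h) :
    (h : G ⧸ N) ∈ Subgroup.centralizer {(g : G ⧸ N)} :=
  Subgroup.mem_centralizer_singleton_iff.mpr (hgh.map (mk' N)).symm

theorem exists_mul_ne_mul_commutator_centralizer_mk {g a b c : G} (ha : Commute g a)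
    (hb : Commute g b) (hc : Commute g c)
    (h : ¬Commute ((⁅a, b⁆ : G) : G ⧸ N) ((⁅a, c⁆ : G) : G ⧸ N)) :
    ∃ x y : commutator (Subgroup.centralizer {(g : G ⧸ N)}), x * y ≠ y * x := by
  refine exists_mul_ne_mul_of_not_commute_commutatorElement
    (a := ⟨_, mk_mem_centralizer_singleton_of_commute ha⟩)
    (b := ⟨_, mk_mem_centralizer_singleton_of_commute hb⟩)
    (c := ⟨_, mk_mem_centralizer_singleton_of_commute ha⟩)
    (d := ⟨_, mk_mem_centralizer_singleton_of_commute hc⟩) fun h' ↦ h ?_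
  simpa only [mk_commutatorElement, map_commutatorElement, Subgroup.subtype_apply] using
    h'.map (Subgroup.subtype _)

end QuotientGroup

namespace Matrix

variable {ι F : Type*} [Fintype ι] [DecidableEq ι] [Field F]

theorem diagonal_mul_transvection {d : ι → F} {i j : ι} (hj : d j ≠ 0) (c : F) :
    diagonal d * transvection i j c = transvection i j (d i * c / d j) * diagonal d := by
  ext a b
  simp only [diagonal_mul, mul_diagonal, transvection, add_apply, one_apply, single_apply]
  split_ifs <;> grind

namespace SpecialLinearGroup

variable {g : SpecialLinearGroup ι F} {d : ι → F} {i j : ι}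

theorem mul_transvection_of_coe_eq_diagonal (hg : (g : Matrix ι ι F) = diagonal d)
    (hij : i ≠ j) (hj : d j ≠ 0) (c : F) :
    g * transvection hij c = transvection hij (d i * c / d j) * g :=
  Subtype.ext <| by rw [coe_mul, coe_mul, hg]; exact diagonal_mul_transvection hj c

theorem commute_of_coe_eq_diagonal {h : SpecialLinearGroup ι F} {e : ι → F}
    (hg : (g : Matrix ι ι F) = diagonal d) (hh : (h : Matrix ι ι F) = diagonal e) :
    Commute g h :=
  Subtype.ext <| by rw [coe_mul, coe_mul, hg, hh]; exact (commute_diagonal d e).eq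

theorem commute_transvection_of_coe_eq_diagonal (hg : (g : Matrix ι ι F) = diagonal d)
    (hij : i ≠ j) (hd : d i = d j) (hj : d j ≠ 0) (c : F) :
    Commute g (transvection hij c) := by
  rw [Commute, SemiconjBy, mul_transvection_of_coe_eq_diagonal hg hij hj, hd,
    mul_div_cancel_left₀ c hj]

theorem commutatorElement_transvection_of_coe_eq_diagonal (hg : (g : Matrix ι ι F) = diagonal d)
    (hij : i ≠ j) (hj : d j ≠ 0) (c : F) :
    ⁅g, transvection hij c⁆ = transvection hij ((d i / d j - 1) * c) := by
  rw [commutatorElement_def, mul_transvection_of_coe_eq_diagonal hg hij hj,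
    mul_inv_cancel_right, transvection_inv, ← transvection_add]
  ring_nf

theorem not_commute_mk_transvection {k : ι} (hij : i ≠ j) (hki : k ≠ i) (hkj : k ≠ j)
    {u v : F} (hu : u ≠ 0) (hv : v ≠ 0) :
    ¬Commute (transvection hij u : SpecialLinearGroup ι F ⧸ Subgroup.center _)
      (transvection hij.symm v) := by
  set A := transvection hij u
  set B := transvection hij.symm v
  intro h
  rw [Commute, SemiconjBy, ← QuotientGroup.mk_mul, ← QuotientGroup.mk_mul, QuotientGroup.eq] at h
  obtain ⟨r, -, hr⟩ := mem_center_iff.mp h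
  have hmat : Matrix.transvection j i v * Matrix.transvection i j u =
      Matrix.transvection i j u * Matrix.transvection j i v * scalar ι r := by
    rw [hr]
    exact congrArg Subtype.val (mul_inv_cancel_left (A * B) (B * A)).symm
  have hkk := congr_fun₂ hmat k k
  have hii := congr_fun₂ hmat i i
  rw [scalar_apply, mul_diagonal, transvection_mul_apply_of_ne _ _ _ _ hkj,
    transvection_mul_apply_of_ne _ _ _ _ hki] at hkk
  rw [scalar_apply, mul_diagonal, transvection_mul_apply_of_ne _ _ _ _ hij,
    transvection_mul_apply_same] at hii
  simp [Matrix.transvection, hki.symm, hkj.symm, hij.symm] at hkk hii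
  rw [← hkk, mul_one, left_eq_add] at hii
  exact mul_ne_zero hu hv hii

end SpecialLinearGroup

end Matrix

open Matrix.SpecialLinearGroup

theorem commutator_of_centralizer_of_involution_psl3_not_abelian_general
    (K : Type) [Field K] [Infinite K] :
    ∃ x y : ↥(commutator ↥(Subgroup.centralizer
        ({(QuotientGroup.mk (diagInvolutionSL3 K) :
            Matrix.SpecialLinearGroup (Fin 3) K ⧸
              Subgroup.center (Matrix.SpecialLinearGroup (Fin 3) K))} :
          Set (Matrix.SpecialLinearGroup (Fin 3) K ⧸
            Subgroup.center (Matrix.SpecialLinearGroup (Fin 3) K))))),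
      x * y ≠ y * x := by
  classical
  obtain ⟨a, ha⟩ := Infinite.exists_notMem_finset ({0, 1} : Finset K)
  simp only [Finset.mem_insert, Finset.mem_singleton, not_or] at ha
  obtain ⟨ha0, ha1⟩ := ha
  have h01 : (0 : Fin 3) ≠ 1 := by decide
  have h02 : (0 : Fin 3) ≠ 2 := by decide
  have hj : (diagInvolutionSL3 K : Matrix (Fin 3) (Fin 3) K) = Matrix.diagonal ![-1, -1, 1] :=
    rfl
  have hD := diag2n_coe h02 a ha0
  refine QuotientGroup.exists_mul_ne_mul_commutator_centralizer_mk
    (commute_of_coe_eq_diagonal hj hD)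
    (commute_transvection_of_coe_eq_diagonal hj h01 rfl (by simp) 1)
    (commute_transvection_of_coe_eq_diagonal hj h01.symm rfl (by simp) 1) ?_
  rw [commutatorElement_transvection_of_coe_eq_diagonal hD h01 (by simp),
    commutatorElement_transvection_of_coe_eq_diagonal hD h01.symm (by simp [ha0])]
  exact not_commute_mk_transvection h01 (k := 2) (by decide) (by decide)
    (by simp [sub_eq_zero, ha1]) (by simp [sub_eq_zero, ha1])

/-- Over an infinite field `K` of characteristic `≠ 2`, the commutator subgroup of the
centralizer in `PSL_3(K)` of the image of `diag(−1, −1, 1) ∈ SL_3(K)` is not abelian. -/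
theorem commutator_of_centralizer_of_involution_psl3_not_abelian
    (K : Type) [Field K] [Infinite K] (hchar : ringChar K ≠ 2) :
    ∃ x y : ↥(commutator ↥(Subgroup.centralizer
        ({(QuotientGroup.mk (diagInvolutionSL3 K) :
            Matrix.SpecialLinearGroup (Fin 3) K ⧸
              Subgroup.center (Matrix.SpecialLinearGroup (Fin 3) K))} :
          Set (Matrix.SpecialLinearGroup (Fin 3) K ⧸
            Subgroup.center (Matrix.SpecialLinearGroup (Fin 3) K))))),
      x * y ≠ y * x :=
  commutator_of_centralizer_of_involution_psl3_not_abelian_general K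
end

section
/- Let K be a field of characteristic ≠ 2 containing an element i with i² = −1, let V be a finite-dimensional vector space over K equipped with a nondegenerate alternating bilinear form B, and let f : V → V be a linear map with f ∘ f = −id that preserves B (i.e., B(f x, f y) = B(x, y) for all x, y). Then V is the direct sum of the eigenspaces V_i = ker(f − i·id) and V_{−i} = ker(f + i·id), each eigenspace is totally isotropic with respect to B, and each eigenspace has dimension equal to (dim V)/2. -/
/-!
Write `V₊ = ker (f - i)` and `V₋ = ker (f + i)`. Since `(f - i)(f + i) = f² + 1 = 0` and
`i ≠ -i`, the two eigenspaces are complementary. If `f x = a x` and `f y = b y`, invariance gives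
`B x y = a b B x y`, so `B x y = 0` unless `a b = 1`; as `i · i = -1 ≠ 1`, both eigenspaces are
totally isotropic. Finally, nondegeneracy makes `u ↦ B u` embed a totally isotropic summand into
the dual of its complement, so each of `V₊`, `V₋` has dimension at most that of the other, and
they share `dim V` equally.
-/

open Module

namespace LinearMap

variable {K V : Type*} [Field K] [AddCommGroup V] [Module K V]

theorem mem_ker_sub_smul_id_iff {f : V →ₗ[K] V} {a : K} {x : V} :
    x ∈ ker (f - a • LinearMap.id) ↔ f x = a • x := by
  simp [sub_eq_zero]

theorem isCompl_ker_sub_smul_id_of_comp_eq_zero {f : V →ₗ[K] V} {a b : K}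
    (hab : a ≠ b) (h : (f - a • LinearMap.id) ∘ₗ (f - b • LinearMap.id) = 0) :
    IsCompl (ker (f - a • LinearMap.id)) (ker (f - b • LinearMap.id)) := by
  have hab' : a - b ≠ 0 := sub_ne_zero.mpr hab
  refine ⟨Submodule.disjoint_def.mpr fun x hxa hxb => ?_, ?_⟩
  · rw [mem_ker_sub_smul_id_iff] at hxa hxb
    have hx : (a - b) • x = 0 := by rw [sub_smul, ← hxa, ← hxb, sub_self]
    exact (smul_eq_zero.mp hx).resolve_left hab'
  · have h' : (f - b • LinearMap.id) ∘ₗ (f - a • LinearMap.id) = 0 := by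
      rw [← h]; ext x; simp only [comp_apply, sub_apply, smul_apply, id_apply, map_sub,
        map_smul]; module
    rw [codisjoint_iff, eq_top_iff]
    intro x _
    -- `(f - b) x ∈ ker (f - a)` and `(f - a) x ∈ ker (f - b)` differ by `(a - b) • x`
    have hx : x = (a - b)⁻¹ • (f - b • LinearMap.id : V →ₗ[K] V) x -
        (a - b)⁻¹ • (f - a • LinearMap.id : V →ₗ[K] V) x := by
      simp only [sub_apply, smul_apply, id_apply, ← smul_sub]
      rw [sub_sub_sub_cancel_left, ← sub_smul, inv_smul_smul₀ hab']
    rw [hx]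
    refine Submodule.sub_mem_sup (Submodule.smul_mem _ _ ?_) (Submodule.smul_mem _ _ ?_)
    · exact LinearMap.congr_fun h x
    · exact LinearMap.congr_fun h' x

theorem BilinForm.apply_eq_zero_of_eigenvectors {B : LinearMap.BilinForm K V} {f : V →ₗ[K] V}
    (hfB : ∀ x y : V, B (f x) (f y) = B x y) {a b : K} (hab : a * b ≠ 1) {x y : V}
    (hx : f x = a • x) (hy : f y = b • y) : B x y = 0 := by
  have h : B x y = a * b * B x y := calc
    B x y = B (f x) (f y) := (hfB x y).symm
    _ = a * b * B x y := by simp only [hx, hy, map_smul, smul_apply, smul_eq_mul]; ring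
  have h' : (a * b - 1) * B x y = 0 := by linear_combination -h
  exact (mul_eq_zero.mp h').resolve_left (sub_ne_zero.mpr hab)

theorem BilinForm.finrank_le_finrank_of_isCompl_of_isotropic [FiniteDimensional K V]
    {B : LinearMap.BilinForm K V} (hB : B.SeparatingLeft) {U W : Submodule K V} (hUW : IsCompl U W)
    (hU : ∀ x ∈ U, ∀ y ∈ U, B x y = 0) : finrank K U ≤ finrank K W := by
  have hinj : Function.Injective (B.domRestrict₁₂ U W) := by
    rw [← ker_eq_bot, ker_eq_bot']
    intro u hu
    have hBu : B u = 0 := ext_on_codisjoint hUW.codisjoint (fun y hy => hU u u.2 y hy)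
      fun y hy => LinearMap.congr_fun hu ⟨y, hy⟩
    exact Subtype.ext (hB u fun y => LinearMap.congr_fun hBu y)
  calc finrank K U ≤ finrank K (Dual K W) := finrank_le_finrank_of_injective hinj
    _ = finrank K W := Subspace.dual_finrank_eq

end LinearMap

open LinearMap

theorem symplectic_second_type_involution_eigenspace_decomposition_general
    (K V : Type) [Field K] (hchar : ringChar K ≠ 2)
    (i : K) (hi : i * i = -1)
    [AddCommGroup V] [Module K V] [FiniteDimensional K V]
    (B : LinearMap.BilinForm K V)
    (hnd : ∀ x : V, (∀ y : V, B x y = 0) → x = 0)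
    (f : V →ₗ[K] V) (hf : f ∘ₗ f = -LinearMap.id)
    (hfB : ∀ x y : V, B (f x) (f y) = B x y) :
    IsCompl (LinearMap.ker (f - i • LinearMap.id)) (LinearMap.ker (f + i • LinearMap.id)) ∧
      (∀ x ∈ LinearMap.ker (f - i • LinearMap.id),
        ∀ y ∈ LinearMap.ker (f - i • LinearMap.id), B x y = 0) ∧
      (∀ x ∈ LinearMap.ker (f + i • LinearMap.id),
        ∀ y ∈ LinearMap.ker (f + i • LinearMap.id), B x y = 0) ∧
      2 * Module.finrank K ↥(LinearMap.ker (f - i • LinearMap.id)) = Module.finrank K V ∧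
      2 * Module.finrank K ↥(LinearMap.ker (f + i • LinearMap.id)) = Module.finrank K V := by
  have hplus : f + i • LinearMap.id = f - (-i) • LinearMap.id := by rw [neg_smul, sub_neg_eq_add]
  have hii : i * i ≠ 1 := hi ▸ Ring.neg_one_ne_one_of_char_ne_two hchar
  have hi0 : i ≠ 0 := by rintro rfl; exact hii (by simpa using hi.symm)
  have hcompl : IsCompl (ker (f - i • LinearMap.id)) (ker (f - (-i) • LinearMap.id)) := by
    refine isCompl_ker_sub_smul_id_of_comp_eq_zero
      (fun h => hi0 ((Ring.eq_self_iff_eq_zero_of_char_ne_two hchar).mp h.symm)) ?_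
    ext x
    have hffx : f (f x) = -x := LinearMap.congr_fun hf x
    simp only [comp_apply, LinearMap.sub_apply, LinearMap.smul_apply, id_apply, map_sub, map_smul,
      hffx, LinearMap.zero_apply]
    linear_combination (norm := module) (-hi) • x
  have hisoP : ∀ x ∈ ker (f - i • LinearMap.id), ∀ y ∈ ker (f - i • LinearMap.id), B x y = 0 :=
    fun x hx y hy => BilinForm.apply_eq_zero_of_eigenvectors hfB hii
      (mem_ker_sub_smul_id_iff.mp hx) (mem_ker_sub_smul_id_iff.mp hy)
  have hisoM : ∀ x ∈ ker (f - (-i) • LinearMap.id), ∀ y ∈ ker (f - (-i) • LinearMap.id),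
      B x y = 0 :=
    fun x hx y hy => BilinForm.apply_eq_zero_of_eigenvectors hfB (by rwa [neg_mul_neg])
      (mem_ker_sub_smul_id_iff.mp hx) (mem_ker_sub_smul_id_iff.mp hy)
  have hle := BilinForm.finrank_le_finrank_of_isCompl_of_isotropic hnd hcompl hisoP
  have hge := BilinForm.finrank_le_finrank_of_isCompl_of_isotropic hnd hcompl.symm hisoM
  have hsum := Submodule.finrank_add_eq_of_isCompl hcompl
  rw [hplus]
  exact ⟨hcompl, hisoP, hisoM, by omega, by omega⟩

/-- Let `K` be a field of characteristic `≠ 2` containing `i` with `i² = −1`, `V` a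
finite-dimensional `K`-vector space with a nondegenerate alternating bilinear form `B`, and
`f : V → V` linear with `f ∘ f = −id` preserving `B`.  Then `V` is the direct sum of the
eigenspaces `ker (f − i·id)` and `ker (f + i·id)`, each eigenspace is totally isotropic for
`B`, and each eigenspace has dimension equal to `(dim V)/2`. -/
theorem symplectic_second_type_involution_eigenspace_decomposition
    (K V : Type) [Field K] (hchar : ringChar K ≠ 2)
    (i : K) (hi : i * i = -1)
    [AddCommGroup V] [Module K V] [FiniteDimensional K V]
    (B : LinearMap.BilinForm K V)
    (halt : ∀ x : V, B x x = 0)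
    (hnd : ∀ x : V, (∀ y : V, B x y = 0) → x = 0)
    (f : V →ₗ[K] V) (hf : f ∘ₗ f = -LinearMap.id)
    (hfB : ∀ x y : V, B (f x) (f y) = B x y) :
    IsCompl (LinearMap.ker (f - i • LinearMap.id)) (LinearMap.ker (f + i • LinearMap.id)) ∧
      (∀ x ∈ LinearMap.ker (f - i • LinearMap.id),
        ∀ y ∈ LinearMap.ker (f - i • LinearMap.id), B x y = 0) ∧
      (∀ x ∈ LinearMap.ker (f + i • LinearMap.id),
        ∀ y ∈ LinearMap.ker (f + i • LinearMap.id), B x y = 0) ∧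
      2 * Module.finrank K ↥(LinearMap.ker (f - i • LinearMap.id)) = Module.finrank K V ∧
      2 * Module.finrank K ↥(LinearMap.ker (f + i • LinearMap.id)) = Module.finrank K V :=
  symplectic_second_type_involution_eigenspace_decomposition_general K V hchar i hi B hnd f hf hfB
end
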